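/- Let ε₀ > 0. Assume that for every x ∈ 𝒳 the map w ∈ W ↦ ψ_w(x) ∈ ℝ^d is Lipschitz continuous with a constant L_W independent of x, and that f⁰ is bounded and measurable. Then the regularized risk map w ∈ W ↦ R_{ε₀}(w) := E_{X,Z}[Σ_{y∈Y} p_0(y | ψ_w(X) + ε₀·Z) · f⁰(y, X)] is continuous on W. -/

import Mathlib

open MeasureTheory Metric Real
open scoped RealInnerProductSpace

noncomputable section

/-- Density of the Gaussian measure `N(0, σ²·I_d)` on `ℝ^d`. -/
def gaussDensity (d : ℕ) (σ : ℝ) (v : EuclideanSpace ℝ (Fin d)) : ℝ :=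
  (2 * π * σ ^ 2) ^ (-(d : ℝ) / 2) * Real.exp (-‖v‖ ^ 2 / (2 * σ ^ 2))

/-- The Gaussian measure `N(0, σ²·I_d)` on `ℝ^d`. -/
def gaussMeasure (d : ℕ) (σ : ℝ) : Measure (EuclideanSpace ℝ (Fin d)) :=
  volume.withDensity fun v => ENNReal.ofReal (gaussDensity d σ v)

/-- Normal cone `F_y` of the finite set `Y` at the point `y`. -/
def normalCone {d : ℕ} (Y : Finset (EuclideanSpace ℝ (Fin d)))
    (y : EuclideanSpace ℝ (Fin d)) : Set (EuclideanSpace ℝ (Fin d)) :=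
  {θ | ∀ y' ∈ Y, ⟪y', θ⟫ ≤ ⟪y, θ⟫}

/-- Internal cone radius `ρ(θ)`. -/
def coneRadius {d : ℕ} (Y : Finset (EuclideanSpace ℝ (Fin d)))
    (θ : EuclideanSpace ℝ (Fin d)) : ℝ :=
  sSup {r : ℝ | 0 < r ∧ ∀ u ∈ closedBall (0 : EuclideanSpace ℝ (Fin d)) 1,
    ∃ y ∈ Y, θ ∈ normalCone Y y ∧ θ + r • u ∈ normalCone Y y}

/-- Uniform probability measure on the closed Euclidean unit ball of `ℝ^d`. -/
def uniformBall (d : ℕ) : Measure (EuclideanSpace ℝ (Fin d)) :=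
  (volume (closedBall (0 : EuclideanSpace ℝ (Fin d)) 1))⁻¹ •
    volume.restrict (closedBall (0 : EuclideanSpace ℝ (Fin d)) 1)

/-- `p_0(y|θ) = P[θ + ρ(θ)·U ∈ F_y]` for `U` uniform on the closed unit ball. -/
def p0 {d : ℕ} (Y : Finset (EuclideanSpace ℝ (Fin d)))
    (y θ : EuclideanSpace ℝ (Fin d)) : ℝ :=
  (uniformBall d {u | θ + coneRadius Y θ • u ∈ normalCone Y y}).toReal

/-!
Write `R(w) = E_X[Φ(ψ_w(X), X)]` with `Φ(θ, x) = Σ_y I_y(θ) f⁰(y, x)` and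
`I_y(θ) = E_Z[p_0(y | θ + ε₀ Z)]`. The function `p_0(y | ·)` may be discontinuous, but it takes
values in `[0, 1]` and is measurable: `ρ(θ) ≥ t` is a countable Boolean combination of closed
conditions on `θ` indexed by rational radii. After the substitution `v = θ + ε₀ z`, `I_y` is the
convolution of this bounded function with a Gaussian kernel, hence continuous by dominated
convergence. As `Φ` is bounded and `w ↦ ψ_w(x)` is Lipschitz, a second application of dominated
convergence gives the continuity of `R`.
-/

section DownwardClosed

variable {S : Set ℝ}

lemma bddAbove_iff_exists_nat_notMem (hS : ∀ ⦃r r'⦄, 0 < r' → r' ≤ r → r ∈ S → r' ∈ S) :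
    BddAbove S ↔ ∃ n : ℕ, (n + 1 : ℝ) ∉ S := by
  constructor
  · rintro ⟨M, hM⟩
    obtain ⟨n, hn⟩ := exists_nat_gt M
    exact ⟨n, fun h => by linarith [hM h]⟩
  · rintro ⟨n, hn⟩
    exact ⟨n + 1, fun s hs => le_of_not_gt fun h => hn (hS (by positivity) h.le hs)⟩

/-- `sSup S = 0` when `S` is unbounded, hence the `BddAbove S` conjunct. -/
lemma le_sSup_iff_bddAbove_and_forall_rat (hS : ∀ ⦃r r'⦄, 0 < r' → r' ≤ r → r ∈ S → r' ∈ S)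
    {t : ℝ} (ht : 0 < t) :
    t ≤ sSup S ↔ BddAbove S ∧ ∀ q : ℚ, 0 < (q : ℝ) → (q : ℝ) < t → (q : ℝ) ∈ S := by
  constructor
  · intro h
    have hbdd : BddAbove S := by
      by_contra hb
      rw [Real.sSup_of_not_bddAbove hb] at h
      linarith
    have hne : S.Nonempty := by
      by_contra hne
      rw [Set.not_nonempty_iff_eq_empty.1 hne, Real.sSup_empty] at h
      linarith
    refine ⟨hbdd, fun q hq0 hqt => ?_⟩
    obtain ⟨s, hs, hqs⟩ := exists_lt_of_lt_csSup hne (hqt.trans_le h)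
    exact hS hq0 hqs.le hs
  · rintro ⟨hbdd, hq⟩
    by_contra! hlt
    obtain ⟨q, hq1, hq2⟩ := exists_rat_btwn (max_lt hlt ht)
    have hq0 : 0 < (q : ℝ) := (le_max_right _ _).trans_lt hq1
    linarith [le_csSup hbdd (hq q hq0 hq2), le_max_left (sSup S) 0]

end DownwardClosed

theorem measurable_sSup_setOf_pos_mem {α : Type*} [MeasurableSpace α] {A : ℝ → Set α}
    (hA : ∀ r, MeasurableSet (A r)) (hanti : ∀ ⦃r r' : ℝ⦄, 0 < r' → r' ≤ r → A r ⊆ A r') :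
    Measurable fun a => sSup {r | 0 < r ∧ a ∈ A r} := by
  refine measurable_of_Ici fun t => ?_
  have hS : ∀ a, ∀ ⦃r r' : ℝ⦄, 0 < r' → r' ≤ r →
      r ∈ {r | 0 < r ∧ a ∈ A r} → r' ∈ {r | 0 < r ∧ a ∈ A r} :=
    fun a r r' h0 hle hr => ⟨h0, hanti h0 hle hr.2⟩
  rcases le_or_gt t 0 with ht | ht
  · convert MeasurableSet.univ
    ext a
    simp only [Set.mem_preimage, Set.mem_Ici, Set.mem_univ, iff_true]
    exact ht.trans (Real.sSup_nonneg fun r hr => hr.1.le)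
  · have hpre : (fun a => sSup {r | 0 < r ∧ a ∈ A r}) ⁻¹' Set.Ici t =
        (⋃ n : ℕ, (A (n + 1))ᶜ) ∩ ⋂ q : ℚ, ⋂ (_ : 0 < (q : ℝ) ∧ (q : ℝ) < t), A q := by
      ext a
      simp only [Set.mem_preimage, Set.mem_Ici, le_sSup_iff_bddAbove_and_forall_rat (hS a) ht,
        bddAbove_iff_exists_nat_notMem (hS a)]
      simp +contextual [Nat.cast_add_one_pos]
    rw [hpre]
    measurability

section ConeRadius

variable {d : ℕ} (Y : Finset (EuclideanSpace ℝ (Fin d)))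

lemma isClosed_normalCone (y : EuclideanSpace ℝ (Fin d)) : IsClosed (normalCone Y y) := by
  simp only [normalCone, Set.ofPred_forall]
  exact isClosed_biInter fun y' _ => isClosed_le (by fun_prop) (by fun_prop)

def admissibleRadiusSet (r : ℝ) : Set (EuclideanSpace ℝ (Fin d)) :=
  {θ | ∀ u ∈ closedBall (0 : EuclideanSpace ℝ (Fin d)) 1,
    ∃ y ∈ Y, θ ∈ normalCone Y y ∧ θ + r • u ∈ normalCone Y y}

lemma isClosed_admissibleRadiusSet (r : ℝ) : IsClosed (admissibleRadiusSet Y r) := by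
  have : admissibleRadiusSet Y r = ⋂ u ∈ closedBall (0 : EuclideanSpace ℝ (Fin d)) 1,
      ⋃ y ∈ Y, normalCone Y y ∩ (· + r • u) ⁻¹' normalCone Y y := by
    ext θ
    simp [admissibleRadiusSet, and_left_comm]
  rw [this]
  exact isClosed_biInter fun u _ => Y.finite_toSet.isClosed_biUnion fun y _ =>
    (isClosed_normalCone Y y).inter ((isClosed_normalCone Y y).preimage (by fun_prop))

lemma admissibleRadiusSet_anti {r r' : ℝ} (h0 : 0 < r') (hle : r' ≤ r) :
    admissibleRadiusSet Y r ⊆ admissibleRadiusSet Y r' := by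
  intro θ hθ u hu
  have hr : 0 < r := h0.trans_le hle
  have hu' : (r' / r) • u ∈ closedBall (0 : EuclideanSpace ℝ (Fin d)) 1 := by
    rw [mem_closedBall_zero_iff] at hu ⊢
    rw [norm_smul, Real.norm_of_nonneg (by positivity)]
    exact mul_le_one₀ (div_le_one_of_le₀ hle hr.le) (norm_nonneg u) hu
  obtain ⟨y, hy, hθy, hy'⟩ := hθ _ hu'
  refine ⟨y, hy, hθy, ?_⟩
  rwa [smul_smul, mul_div_cancel₀ _ hr.ne'] at hy'

lemma measurable_coneRadius : Measurable (coneRadius Y) :=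
  measurable_sSup_setOf_pos_mem (fun r => (isClosed_admissibleRadiusSet Y r).measurableSet)
    fun _ _ h0 hle => admissibleRadiusSet_anti Y h0 hle

end ConeRadius

section UniformBall

variable {d : ℕ}

lemma uniformBall_eq_cond :
    uniformBall d = ProbabilityTheory.cond volume (closedBall (0 : EuclideanSpace ℝ (Fin d)) 1) :=
  rfl

instance : IsProbabilityMeasure (uniformBall d) := by
  rw [uniformBall_eq_cond]
  exact ProbabilityTheory.cond_isProbabilityMeasure_of_finite
    (measure_closedBall_pos _ _ one_pos).ne' measure_closedBall_lt_top.ne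

variable (Y : Finset (EuclideanSpace ℝ (Fin d)))

lemma measurable_p0 (y : EuclideanSpace ℝ (Fin d)) : Measurable (p0 Y y) := by
  have hm : Measurable fun q : EuclideanSpace ℝ (Fin d) × EuclideanSpace ℝ (Fin d) =>
      q.1 + coneRadius Y q.1 • q.2 :=
    measurable_fst.add (((measurable_coneRadius Y).comp measurable_fst).smul measurable_snd)
  exact (measurable_measure_prodMk_left (ν := uniformBall d)
    (hm (isClosed_normalCone Y y).measurableSet)).ennreal_toReal

lemma abs_p0_le_one (y θ : EuclideanSpace ℝ (Fin d)) : |p0 Y y θ| ≤ 1 := by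
  rw [p0, abs_of_nonneg ENNReal.toReal_nonneg]
  exact ENNReal.toReal_le_of_le_ofReal zero_le_one (by simpa using prob_le_one)

end UniformBall

lemma exp_neg_mul_sq_norm_sub_le {V : Type*} [SeminormedAddCommGroup V] {b : ℝ} (hb : 0 ≤ b)
    {v θ θ₀ : V} (h : ‖θ - θ₀‖ ≤ 1) :
    exp (-b * ‖v - θ‖ ^ 2) ≤ exp b * exp (-(b / 2) * ‖v - θ₀‖ ^ 2) := by
  have hsq : ‖v - θ₀‖ ^ 2 ≤ 2 * (‖v - θ‖ ^ 2 + ‖θ - θ₀‖ ^ 2) :=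
    (pow_le_pow_left₀ (norm_nonneg _) (norm_sub_le_norm_sub_add_norm_sub v θ θ₀) 2).trans add_sq_le
  have h1 : ‖θ - θ₀‖ ^ 2 ≤ 1 := pow_le_one₀ (norm_nonneg _) h
  rw [← exp_add, exp_le_exp]
  nlinarith

section GaussianKernel

variable {V : Type*} [NormedAddCommGroup V] [InnerProductSpace ℝ V] [FiniteDimensional ℝ V]
  [MeasurableSpace V] [BorelSpace V]

lemma integrable_exp_neg_mul_sq_norm {b : ℝ} (hb : 0 < b) :
    Integrable fun v : V => exp (-b * ‖v‖ ^ 2) := by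
  refine (GaussianFourier.integrable_cexp_neg_mul_sq_norm_add (V := V) (b := b)
    (by simpa using hb) 0 0).norm.congr (ae_of_all _ fun v => ?_)
  dsimp only
  rw [Complex.norm_exp]
  simp [← Complex.ofReal_pow]

theorem continuous_integral_exp_neg_mul_sq_norm_sub_mul {b C : ℝ} (hb : 0 < b) {F : V → ℝ}
    (hF : AEStronglyMeasurable F) (hFC : ∀ v, |F v| ≤ C) :
    Continuous fun θ => ∫ v, exp (-b * ‖v - θ‖ ^ 2) * F v := by
  refine continuous_iff_continuousAt.2 fun θ₀ => continuousAt_of_dominated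
    (bound := fun v => exp b * exp (-(b / 2) * ‖v - θ₀‖ ^ 2) * C) ?_ ?_ ?_ ?_
  · exact Filter.Eventually.of_forall fun θ => (by fun_prop : Continuous fun v =>
      exp (-b * ‖v - θ‖ ^ 2)).aestronglyMeasurable.mul hF
  · filter_upwards [closedBall_mem_nhds θ₀ one_pos] with θ hθ
    refine ae_of_all _ fun v => ?_
    rw [norm_mul, Real.norm_of_nonneg (exp_pos _).le, Real.norm_eq_abs]
    exact mul_le_mul (exp_neg_mul_sq_norm_sub_le hb.le (mem_closedBall_iff_norm.1 hθ))
      (hFC v) (abs_nonneg _) (by positivity)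
  · exact (((integrable_exp_neg_mul_sq_norm (half_pos hb)).comp_sub_right θ₀).const_mul
      (exp b)).mul_const C
  · exact ae_of_all _ fun v => Continuous.continuousAt (by fun_prop)

end GaussianKernel

section GaussianMeasure

variable {d : ℕ} {σ : ℝ}

lemma gaussDensity_smul (c : ℝ) (v : EuclideanSpace ℝ (Fin d)) :
    gaussDensity d σ (c • v) =
      (2 * π * σ ^ 2) ^ (-(d : ℝ) / 2) * exp (-(c ^ 2 / (2 * σ ^ 2)) * ‖v‖ ^ 2) := by
  rw [gaussDensity, norm_smul, Real.norm_eq_abs, mul_pow, sq_abs]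
  ring_nf

lemma gaussDensity_nonneg (v : EuclideanSpace ℝ (Fin d)) : 0 ≤ gaussDensity d σ v := by
  unfold gaussDensity
  positivity

lemma measurable_gaussDensity : Measurable (gaussDensity d σ) := by
  unfold gaussDensity
  fun_prop

lemma isFiniteMeasure_gaussMeasure (hσ : σ ≠ 0) : IsFiniteMeasure (gaussMeasure d σ) := by
  have hint : Integrable (gaussDensity d σ) := by
    refine ((integrable_exp_neg_mul_sq_norm (V := EuclideanSpace ℝ (Fin d))
      (b := 1 / (2 * σ ^ 2)) (by positivity)).const_mul ((2 * π * σ ^ 2) ^ (-(d : ℝ) / 2))).congr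
      (ae_of_all _ fun v => by simpa using (gaussDensity_smul 1 v).symm)
  constructor
  rw [gaussMeasure, withDensity_apply _ MeasurableSet.univ, Measure.restrict_univ]
  exact hint.lintegral_lt_top

lemma integral_comp_add_smul_gaussMeasure {ε : ℝ} (hε : ε ≠ 0)
    (F : EuclideanSpace ℝ (Fin d) → ℝ) (θ : EuclideanSpace ℝ (Fin d)) :
    ∫ z, F (θ + ε • z) ∂gaussMeasure d σ =
      |(ε ^ d)⁻¹| * ∫ v, gaussDensity d σ (ε⁻¹ • (v - θ)) * F v := by
  set G := fun w => gaussDensity d σ (ε⁻¹ • (w - θ)) * F w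
  have hG : ∀ z, gaussDensity d σ z * F (θ + ε • z) = G (θ + ε • z) := fun z => by
    simp [G, smul_smul, inv_mul_cancel₀ hε]
  rw [gaussMeasure, integral_withDensity_eq_integral_toReal_smul
    measurable_gaussDensity.ennreal_ofReal (ae_of_all _ fun _ => ENNReal.ofReal_lt_top)]
  simp_rw [ENNReal.toReal_ofReal (gaussDensity_nonneg _), smul_eq_mul, hG]
  rw [Measure.integral_comp_smul volume (fun w => G (θ + w)), finrank_euclideanSpace_fin,
    integral_add_left_eq_self G θ, smul_eq_mul]

end GaussianMeasure

theorem continuous_integral_comp_add_smul_gaussMeasure {d : ℕ} {σ ε C : ℝ} (hσ : σ ≠ 0)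
    (hε : ε ≠ 0) {F : EuclideanSpace ℝ (Fin d) → ℝ} (hF : Measurable F) (hFC : ∀ v, |F v| ≤ C) :
    Continuous fun θ => ∫ z, F (θ + ε • z) ∂gaussMeasure d σ := by
  simp_rw [integral_comp_add_smul_gaussMeasure hε, gaussDensity_smul, mul_assoc,
    integral_const_mul]
  exact ((continuous_integral_exp_neg_mul_sq_norm_sub_mul (by positivity)
    hF.aestronglyMeasurable hFC).const_mul _).const_mul _

theorem continuousOn_integral_comp_of_bounded {T E 𝒳 : Type*} [TopologicalSpace T]
    [FirstCountableTopology T] [TopologicalSpace E] [MeasurableSpace E] [MeasurableSpace 𝒳]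
    {μ : Measure 𝒳} [IsFiniteMeasure μ] {W : Set T} {ψ : T → 𝒳 → E} {Φ : E → 𝒳 → ℝ} {C : ℝ}
    (hΦ : Measurable (Function.uncurry Φ)) (hΦc : ∀ x, Continuous (Φ · x))
    (hΦC : ∀ θ x, |Φ θ x| ≤ C) (hψ : ∀ w, Measurable (ψ w)) (hψc : ∀ x, ContinuousOn (ψ · x) W) :
    ContinuousOn (fun w => ∫ x, Φ (ψ w x) x ∂μ) W :=
  continuousOn_of_dominated (bound := fun _ => C)
    (fun w _ => (hΦ.comp ((hψ w).prodMk measurable_id)).aestronglyMeasurable)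
    (fun _ _ => ae_of_all _ fun _ => hΦC _ _) (integrable_const C)
    (ae_of_all _ fun x => (hΦc x).comp_continuousOn (hψc x))

lemma integrable_p0_comp {d : ℕ} (Y : Finset (EuclideanSpace ℝ (Fin d)))
    (y : EuclideanSpace ℝ (Fin d)) {Ω : Type*} [MeasurableSpace Ω] {ν : Measure Ω}
    [IsFiniteMeasure ν] {g : Ω → EuclideanSpace ℝ (Fin d)} (hg : Measurable g) :
    Integrable (fun z => p0 Y y (g z)) ν :=
  .of_bound ((measurable_p0 Y y).comp hg).aestronglyMeasurable 1
    (ae_of_all _ fun z => abs_p0_le_one Y y (g z))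

theorem statement5_general {d p : ℕ} (hd : 1 ≤ d) (Y : Finset (EuclideanSpace ℝ (Fin d)))
    {𝒳 : Type*} [MeasurableSpace 𝒳] (μ : Measure 𝒳) [IsProbabilityMeasure μ]
    (W : Set (EuclideanSpace ℝ (Fin p)))
    (ψ : EuclideanSpace ℝ (Fin p) → 𝒳 → EuclideanSpace ℝ (Fin d))
    (hψmeas : ∀ w, Measurable (ψ w))
    (LW : ℝ) (hψlip : ∀ x : 𝒳, ∀ w ∈ W, ∀ w' ∈ W, ‖ψ w x - ψ w' x‖ ≤ LW * ‖w - w'‖)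
    (f : EuclideanSpace ℝ (Fin d) → 𝒳 → ℝ) (hfmeas : ∀ y, Measurable (f y))
    (Cf : ℝ) (hfbd : ∀ y x, |f y x| ≤ Cf)
    (ε₀ : ℝ) (hε : 0 < ε₀)
    (R : EuclideanSpace ℝ (Fin p) → ℝ)
    (hR : ∀ w, R w = ∫ x, ∫ z, (∑ y ∈ Y, p0 Y y (ψ w x + ε₀ • z) * f y x)
        ∂(gaussMeasure d (Real.sqrt d)⁻¹) ∂μ) :
    ContinuousOn R W := by
  have hσ : (Real.sqrt d)⁻¹ ≠ 0 := by positivity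
  have := isFiniteMeasure_gaussMeasure (d := d) hσ
  set γ := gaussMeasure d (Real.sqrt d)⁻¹
  set I := fun y θ => ∫ z, p0 Y y (θ + ε₀ • z) ∂γ
  have hI : ∀ y, Continuous (I y) := fun y => continuous_integral_comp_add_smul_gaussMeasure hσ
    hε.ne' (measurable_p0 Y y) (abs_p0_le_one Y y)
  have hIγ : ∀ y θ, |I y θ| ≤ γ.real Set.univ := fun y θ => by
    simpa using norm_integral_le_of_norm_le_const (μ := γ)
      (f := fun z => p0 Y y (θ + ε₀ • z)) (ae_of_all _ fun z => abs_p0_le_one Y y _)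
  have hRI : ∀ w, R w = ∫ x, ∑ y ∈ Y, I y (ψ w x) * f y x ∂μ := fun w => by
    rw [hR w]
    refine integral_congr_ae (ae_of_all _ fun x => ?_)
    dsimp only
    rw [integral_finsetSum Y fun y _ =>
      (integrable_p0_comp Y y (by fun_prop)).mul_const (f y x)]
    exact Finset.sum_congr rfl fun y _ => integral_mul_const _ _
  refine ContinuousOn.congr ?_ fun w _ => hRI w
  refine continuousOn_integral_comp_of_bounded (C := Y.card * (γ.real Set.univ * Cf))
    ?_ (fun x => continuous_finsetSum Y fun y _ => (hI y).mul continuous_const) (fun θ x => ?_)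
    hψmeas fun x => (LipschitzOnWith.of_dist_le' fun w hw w' hw' => by
      simpa only [dist_eq_norm] using hψlip x w hw w' hw').continuousOn
  · exact Finset.measurable_sum Y fun y _ =>
      ((hI y).measurable.comp measurable_fst).mul ((hfmeas y).comp measurable_snd)
  · refine (Finset.abs_sum_le_sum_abs _ _).trans ?_
    simpa using Finset.sum_le_card_nsmul Y _ _ fun y _ => (abs_mul _ _).trans_le
      (mul_le_mul (hIγ y θ) (hfbd y x) (abs_nonneg _) measureReal_nonneg)

/-- For `ε₀ > 0`, under the Lipschitz assumption on the statistical model and boundedness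
of `f⁰`, the regularized risk `w ↦ R_{ε₀}(w) = E_{X,Z}[Σ_{y∈Y} p_0(y|ψ_w(X)+ε₀Z)·f⁰(y,X)]`
(with `Z ~ N(0,(1/d)·I_d)` independent of `X`) is continuous on `W`. -/
theorem statement5 {d p : ℕ} (hd : 1 ≤ d) (Y : Finset (EuclideanSpace ℝ (Fin d)))
    (hY : Y.Nonempty)
    {𝒳 : Type*} [MeasurableSpace 𝒳] (μ : Measure 𝒳) [IsProbabilityMeasure μ]
    (W : Set (EuclideanSpace ℝ (Fin p)))
    (ψ : EuclideanSpace ℝ (Fin p) → 𝒳 → EuclideanSpace ℝ (Fin d))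
    (hψmeas : ∀ w, Measurable (ψ w))
    (LW : ℝ) (hψlip : ∀ x : 𝒳, ∀ w ∈ W, ∀ w' ∈ W, ‖ψ w x - ψ w' x‖ ≤ LW * ‖w - w'‖)
    (f : EuclideanSpace ℝ (Fin d) → 𝒳 → ℝ) (hfmeas : ∀ y, Measurable (f y))
    (Cf : ℝ) (hfbd : ∀ y x, |f y x| ≤ Cf)
    (ε₀ : ℝ) (hε : 0 < ε₀)
    (R : EuclideanSpace ℝ (Fin p) → ℝ)
    (hR : ∀ w, R w = ∫ x, ∫ z, (∑ y ∈ Y, p0 Y y (ψ w x + ε₀ • z) * f y x)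
        ∂(gaussMeasure d (Real.sqrt d)⁻¹) ∂μ) :
    ContinuousOn R W :=
  statement5_general hd Y μ W ψ hψmeas LW hψlip f hfmeas Cf hfbd ε₀ hε R hR
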